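/- Carathéodory convergence of simply connected domains does not depend on the choice of marked point: if (Ω_n, w_n) → (Ω, w) in the Carathéodory sense, w' ∈ Ω, and w'_n ∈ Ω_n with w'_n → w', then (Ω_n, w'_n) → (Ω, w') in the Carathéodory sense. -/

import Mathlib

/-!
Join `wl` to `wl'` by a path in `Ωl` and thicken it slightly: this gives a connected open `W ∋ wl, wl'`
with compact closure in `Ωl`, so `W ⊆ Ω n` for all large `n`. A connected open `U ∋ wl'` lying in
infinitely many `Ω n` can then be enlarged to the connected open `U ∪ W ∋ wl`, which still lies in
infinitely many `Ω n`, and the kernel condition at `wl` gives `U ⊆ U ∪ W ⊆ Ωl`.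
-/

open MeasureTheory Metric Filter Topology

noncomputable section

/-- Mean value property over balls: the notion of harmonicity used here. -/
def HasMVP (h : ℂ → ℝ) (Ω : Set ℂ) : Prop :=
  ∀ z ∈ Ω, ∀ r : ℝ, 0 < r → closedBall z r ⊆ Ω →
    h z = ⨍ x in ball z r, h x

/-- `μ` is the harmonic measure of the domain `Ω` at the point `w`:
a probability measure on `∂Ω` reproducing values of bounded harmonic functions
continuous up to the boundary. -/
def IsHarmonicMeasure (Ω : Set ℂ) (w : ℂ) (μ : Measure ℂ) : Prop :=
  IsProbabilityMeasure μ ∧ μ (frontier Ω)ᶜ = 0 ∧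
  ∀ h : ℂ → ℝ, ContinuousOn h (closure Ω) → (∃ M, ∀ x, |h x| ≤ M) →
    HasMVP h Ω → h w = ∫ x, h x ∂μ

/-- Carathéodory convergence of pointed domains. -/
def CaratheodoryConv (Ω : ℕ → Set ℂ) (w : ℕ → ℂ) (Ωl : Set ℂ) (wl : ℂ) : Prop :=
  Tendsto w atTop (nhds wl) ∧
  (∀ K : Set ℂ, IsCompact K → K ⊆ Ωl → ∀ᶠ n in atTop, K ⊆ Ω n) ∧
  (∀ U : Set ℂ, IsOpen U → IsConnected U → wl ∈ U →
    (∃ᶠ n in atTop, U ⊆ Ω n) → U ⊆ Ωl)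

/-- `(Ω n, w n)` and `(Ωl, wl)` have arbitrarily good common interior approximations. -/
def CommonInteriorApprox (Ω : ℕ → Set ℂ) (w : ℕ → ℂ) (Ωl : Set ℂ) (wl : ℂ) : Prop :=
  Tendsto w atTop (nhds wl) ∧
  ∀ ε : ℝ, 0 < ε → ∃ N : ℕ, ∃ K : Set ℂ, IsClosed K ∧ IsConnected K ∧ wl ∈ K ∧
    K ⊆ Ωl ∧ (∀ n, N ≤ n → K ⊆ Ω n) ∧
    ∀ x ∈ frontier K, infDist x (frontier Ωl) < ε ∧
      ∀ n, N ≤ n → infDist x (frontier (Ω n)) < ε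

/-- Weak convergence of measures: integrals of bounded continuous functions converge. -/
def WeakConv (μ : ℕ → Measure ℂ) (ν : Measure ℂ) : Prop :=
  ∀ f : BoundedContinuousFunction ℂ ℝ, Tendsto (fun n => ∫ x, f x ∂(μ n)) atTop (nhds (∫ x, f x ∂ν))

/-- Uniform regularity of a sequence of domains, expressed via the families
`μ n z` of harmonic measures of `Ω n` at `z`. -/
def UniformlyRegular (Ω : ℕ → Set ℂ) (μ : ℕ → ℂ → Measure ℂ) : Prop :=
  ∀ δ : ℝ, 0 < δ → ∃ ε : ℝ, 0 < ε ∧ ∀ n, ∀ z ∈ Ω n,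
    infDist z (frontier (Ω n)) < ε → ENNReal.ofReal (1 - δ) < μ n z (ball z δ)

/-- A domain is regular iff the support of its harmonic measure (at any interior
point) is the whole boundary. -/
def IsRegularDomain (Ω : Set ℂ) (ν : ℂ → Measure ℂ) : Prop :=
  ∀ w ∈ Ω, ∀ x ∈ frontier Ω, ∀ r : ℝ, 0 < r → 0 < ν w (ball x r)

open Set

theorem IsConnected.thickening {E : Type*} [NormedAddCommGroup E] [NormedSpace ℝ E]
    {s : Set E} (hs : IsConnected s) {r : ℝ} (hr : 0 < r) : IsConnected (Metric.thickening r s) := by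
  obtain ⟨x, hx⟩ := hs.nonempty
  refine ⟨⟨x, self_subset_thickening hr s hx⟩, isPreconnected_of_forall x fun y hy => ?_⟩
  obtain ⟨z, hz, hyz⟩ := mem_thickening_iff.1 hy
  exact ⟨s ∪ ball z r, union_subset (self_subset_thickening hr s) (ball_subset_thickening hz r),
    .inl hx, .inr hyz, hs.isPreconnected.union z hz (mem_ball_self hr) isPreconnected_ball⟩

theorem IsOpen.exists_isConnected_isCompact_closure_subset
    {E : Type*} [NormedAddCommGroup E] [NormedSpace ℝ E] [ProperSpace E]
    {Ω : Set E} (hΩ : IsOpen Ω) (hc : IsConnected Ω) {a b : E} (ha : a ∈ Ω) (hb : b ∈ Ω) :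
    ∃ W, IsOpen W ∧ IsConnected W ∧ a ∈ W ∧ b ∈ W ∧ IsCompact (closure W) ∧ closure W ⊆ Ω := by
  obtain ⟨γ, hγ⟩ : JoinedIn Ω a b := (hΩ.isConnected_iff_isPathConnected.1 hc).joinedIn a ha b hb
  have hK : IsCompact (range γ) := isCompact_range γ.continuous
  obtain ⟨r, hr, hrΩ⟩ := hK.exists_cthickening_subset_open hΩ (range_subset_iff.2 hγ)
  have hclosure : closure (thickening r (range γ)) ⊆ cthickening r (range γ) :=
    closure_thickening_subset_cthickening r _
  refine ⟨thickening r (range γ), isOpen_thickening,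
    (isConnected_range γ.continuous).thickening hr, self_subset_thickening hr _ ⟨0, γ.source⟩,
    self_subset_thickening hr _ ⟨1, γ.target⟩,
    hK.cthickening.of_isClosed_subset isClosed_closure hclosure, hclosure.trans hrΩ⟩

theorem kernel_condition_transfer {X ι : Type*} [TopologicalSpace X] {l : Filter ι}
    {Ω : ι → Set X} {Ωl W : Set X} {a b : X}
    (hW : IsOpen W) (hWc : IsConnected W) (ha : a ∈ W) (hb : b ∈ W) (hWΩ : ∀ᶠ n in l, W ⊆ Ω n)
    (hker : ∀ U : Set X, IsOpen U → IsConnected U → a ∈ U → (∃ᶠ n in l, U ⊆ Ω n) → U ⊆ Ωl)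
    (U : Set X) (hU : IsOpen U) (hUc : IsConnected U) (hbU : b ∈ U)
    (hUΩ : ∃ᶠ n in l, U ⊆ Ω n) : U ⊆ Ωl :=
  subset_union_left.trans <|
    hker (U ∪ W) (hU.union hW) (IsConnected.union ⟨b, hbU, hb⟩ hUc hWc) (.inr ha) <|
      (hUΩ.and_eventually hWΩ).mono fun _ hn => union_subset hn.1 hn.2

theorem caratheodory_basepoint_indep_general
    (Ω : ℕ → Set ℂ) (w w' : ℕ → ℂ) (Ωl : Set ℂ) (wl wl' : ℂ)
    (hopenl : IsOpen Ωl) (hconnl : IsConnected Ωl)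
    (hwl : wl ∈ Ωl) (hwl' : wl' ∈ Ωl)
    (h : CaratheodoryConv Ω w Ωl wl)
    (hlim : Tendsto w' atTop (nhds wl')) :
    CaratheodoryConv Ω w' Ωl wl' := by
  obtain ⟨-, hcompact, hkernel⟩ := h
  obtain ⟨W, hWo, hWc, hwlW, hwl'W, hWcpt, hWΩ⟩ :=
    hopenl.exists_isConnected_isCompact_closure_subset hconnl hwl hwl'
  have hW_eventually : ∀ᶠ n in atTop, W ⊆ Ω n :=
    (hcompact _ hWcpt hWΩ).mono fun _ hn => subset_closure.trans hn
  exact ⟨hlim, hcompact, kernel_condition_transfer hWo hWc hwlW hwl'W hW_eventually hkernel⟩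

/-- Carathéodory convergence of simply connected domains does not depend on the
choice of marked points. -/
theorem caratheodory_basepoint_indep
    (Ω : ℕ → Set ℂ) (w w' : ℕ → ℂ) (Ωl : Set ℂ) (wl wl' : ℂ)
    (hopen : ∀ n, IsOpen (Ω n)) (hconn : ∀ n, IsConnected (Ω n))
    (hsc : ∀ n, SimplyConnectedSpace (Ω n))
    (hhyp : ∀ n, (Ω n)ᶜ.Nonempty)
    (hw : ∀ n, w n ∈ Ω n) (hw' : ∀ n, w' n ∈ Ω n)
    (hopenl : IsOpen Ωl) (hconnl : IsConnected Ωl)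
    (hscl : SimplyConnectedSpace Ωl)
    (hhypl : Ωlᶜ.Nonempty) (hwl : wl ∈ Ωl) (hwl' : wl' ∈ Ωl)
    (h : CaratheodoryConv Ω w Ωl wl)
    (hlim : Tendsto w' atTop (nhds wl')) :
    CaratheodoryConv Ω w' Ωl wl' :=
  caratheodory_basepoint_indep_general Ω w w' Ωl wl wl' hopenl hconnl hwl hwl' h hlim
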